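/- Let q(t) be a differentiable curve of unit quaternions whose associated rotation matrix Λ(t) (via the Euler-Rodrigues map) satisfies Λ̇ = Λ Ω̂ for Ω(t) ∈ ℝ³. Then q̇ = (1/2) q Ω^♯. -/

import Mathlib

/-!
Let `p = q* q̇`. Differentiating `q* q = 1` gives `p* = -p`, so `p = v♯` is pure and `q̇ = q p`.
Differentiating `Λ Y = (q Y♯ q*)♭` gives `(Λ̇ Y)♯ = q [p, Y♯] q*`, while `(Λ Ω̂ Y)♯ = q (Ω × Y)♯ q*`;
hence `[v♯, Y♯] = (Ω × Y)♯` for every `Y`. Since `[v♯, Y♯] = 2 (v × Y)♯`, this forces `2 v = Ω`.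
-/

open Matrix Quaternion

/-- Embed a vector in `ℝ³` as a pure quaternion. -/
def sharp (Y : Fin 3 → ℝ) : Quaternion ℝ := ⟨0, Y 0, Y 1, Y 2⟩

/-- Extract the vector part of a quaternion. -/
def flat (p : Quaternion ℝ) : Fin 3 → ℝ := ![p.imI, p.imJ, p.imK]

/-- The hat map sending `ω` to the skew-symmetric matrix `ω̂` with `ω̂ v = ω ×₃ v`. -/
def hat (ω : Fin 3 → ℝ) : Matrix (Fin 3) (Fin 3) ℝ :=
  !![0, -ω 2, ω 1; ω 2, 0, -ω 0; -ω 1, ω 0, 0]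

@[simp] lemma sharp_re (Y : Fin 3 → ℝ) : (sharp Y).re = 0 := rfl
@[simp] lemma sharp_imI (Y : Fin 3 → ℝ) : (sharp Y).imI = Y 0 := rfl
@[simp] lemma sharp_imJ (Y : Fin 3 → ℝ) : (sharp Y).imJ = Y 1 := rfl
@[simp] lemma sharp_imK (Y : Fin 3 → ℝ) : (sharp Y).imK = Y 2 := rfl

lemma sharp_smul (c : ℝ) (Y : Fin 3 → ℝ) : sharp (c • Y) = c • sharp Y := by
  ext <;> simp

instance : StarModule ℝ ℍ := ⟨fun r a => by ext <;> simp⟩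

noncomputable def sharpCLM : (Fin 3 → ℝ) →L[ℝ] ℍ :=
  LinearMap.toContinuousLinearMap
    { toFun := sharp
      map_add' := fun _ _ => by ext <;> simp
      map_smul' := sharp_smul }

lemma sharp_injective : Function.Injective sharp := fun a b h => by
  have h0 := congrArg QuaternionAlgebra.imI h
  have h1 := congrArg QuaternionAlgebra.imJ h
  have h2 := congrArg QuaternionAlgebra.imK h
  ext i; fin_cases i <;> assumption

lemma sharp_flat_of_re_eq_zero {x : ℍ} (h : x.re = 0) : sharp (flat x) = x := by
  ext <;> simp [flat, h]

lemma sharp_mul_sub_mul_sharp (a b : Fin 3 → ℝ) :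
    sharp a * sharp b - sharp b * sharp a = (2 : ℝ) • sharp (a ⨯₃ b) := by
  ext <;> simp [cross_apply] <;> ring

lemma hat_mulVec (ω v : Fin 3 → ℝ) : hat ω *ᵥ v = ω ⨯₃ v := by
  ext i; fin_cases i <;> simp [hat, cross_apply, mulVec, dotProduct, Fin.sum_univ_three] <;> ring

lemma eq_of_forall_cross_eq {a b : Fin 3 → ℝ} (h : ∀ v, a ⨯₃ v = b ⨯₃ v) : a = b := by
  have h0 := congrFun (h ![0, 1, 0]) 2
  have h1 := congrFun (h ![0, 0, 1]) 0
  have h2 := congrFun (h ![1, 0, 0]) 1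
  ext i; fin_cases i <;> simp [cross_apply] at h0 h1 h2 ⊢ <;> linarith

lemma star_mul_self_of_norm_eq_one {q : ℍ} (h : ‖q‖ = 1) : star q * q = 1 := by
  rw [star_mul_self, normSq_eq_norm_mul_self, h, mul_one, coe_one]

lemma mul_star_self_of_norm_eq_one {q : ℍ} (h : ‖q‖ = 1) : q * star q = 1 := by
  rw [self_mul_star, normSq_eq_norm_mul_self, h, mul_one, coe_one]

lemma inv_eq_star_of_norm_eq_one {q : ℍ} (h : ‖q‖ = 1) : q⁻¹ = star q :=
  inv_eq_of_mul_eq_one_left (star_mul_self_of_norm_eq_one h)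

lemma re_mul_sharp_mul_star (a : ℍ) (Y : Fin 3 → ℝ) : (a * sharp Y * star a).re = 0 := by
  rw [← star_eq_neg, star_mul, star_mul, star_star, star_eq_neg.2 rfl]
  noncomm_ring

lemma eq_half_smul_sharp_of_forall_commutator {p : ℍ} {ω : Fin 3 → ℝ} (hp : p.re = 0)
    (h : ∀ Y, p * sharp Y - sharp Y * p = sharp (ω ⨯₃ Y)) : p = (1 / 2 : ℝ) • sharp ω := by
  have hflat : (2 : ℝ) • flat p = ω := eq_of_forall_cross_eq fun Y => by
    apply sharp_injective
    rw [← h, ← sharp_flat_of_re_eq_zero hp, sharp_mul_sub_mul_sharp, LinearMap.map_smul₂, sharp_smul,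
      sharp_flat_of_re_eq_zero hp]
  rw [← sharp_flat_of_re_eq_zero hp, ← hflat, sharp_smul, smul_smul]
  norm_num

lemma star_star_mul_eq_neg_of_hasDerivAt {A : Type*} [NormedRing A] [NormedAlgebra ℝ A] [StarRing A]
    [StarModule ℝ A] [ContinuousStar A] {q : ℝ → A} {q' : A} {t : ℝ}
    (hu : ∀ s, star (q s) * q s = 1) (hq : HasDerivAt q q' t) :
    star (star (q t) * q') = -(star (q t) * q') := by
  have hderiv := hq.star.fun_mul hq
  simp only [hu] at hderiv
  rw [star_mul, star_star]
  exact eq_neg_of_add_eq_zero_left ((hasDerivAt_const t 1).unique hderiv).symm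

lemma sharp_mulVec_eq_of_hasDerivAt {q : ℝ → ℍ} {q' : ℍ} {Λ : ℝ → Matrix (Fin 3) (Fin 3) ℝ}
    {Λ' : Matrix (Fin 3) (Fin 3) ℝ} {t : ℝ}
    (hΛ : ∀ s Y, Λ s *ᵥ Y = flat (q s * sharp Y * star (q s))) (hq : HasDerivAt q q' t)
    (hΛ' : ∀ i j, HasDerivAt (fun s => Λ s i j) (Λ' i j) t) (Y : Fin 3 → ℝ) :
    sharp (Λ' *ᵥ Y) = q' * sharp Y * star (q t) + q t * sharp Y * star q' := by
  have hmulVec : HasDerivAt (fun s => Λ s *ᵥ Y) (Λ' *ᵥ Y) t := hasDerivAt_pi.2 fun i => by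
    simp only [mulVec, dotProduct]
    exact HasDerivAt.fun_sum fun j _ => (hΛ' i j).mul_const (Y j)
  have hconj : HasDerivAt (fun s => q s * sharp Y * star (q s))
      (q' * sharp Y * star (q t) + q t * sharp Y * star q') t := by
    simpa using (hq.mul_const (sharp Y)).fun_mul hq.star
  have hsharp := sharpCLM.hasFDerivAt.comp_hasDerivAt t hmulVec
  have hfun : ⇑sharpCLM ∘ (fun s => Λ s *ᵥ Y) = fun s => q s * sharp Y * star (q s) := funext fun s =>
    (congrArg sharp (hΛ s Y)).trans (sharp_flat_of_re_eq_zero (re_mul_sharp_mul_star _ _))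
  rw [hfun] at hsharp
  exact hsharp.unique hconj

theorem quaternion_kinematics
    (q q' : ℝ → Quaternion ℝ) (Λ Λ' : ℝ → Matrix (Fin 3) (Fin 3) ℝ)
    (Ω : ℝ → Fin 3 → ℝ)
    (hunit : ∀ t, ‖q t‖ = 1)
    (hq : ∀ t, HasDerivAt q (q' t) t)
    (hΛ : ∀ t Y, (Λ t).mulVec Y = flat (q t * sharp Y * (q t)⁻¹))
    (hΛderiv : ∀ t i j, HasDerivAt (fun s => Λ s i j) (Λ' t i j) t)
    (hkin : ∀ t, Λ' t = Λ t * hat (Ω t)) (t : ℝ) :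
    q' t = (1 / 2 : ℝ) • (q t * sharp (Ω t)) := by
  have hu s : star (q s) * q s = 1 := star_mul_self_of_norm_eq_one (hunit s)
  have hΛconj s Y : Λ s *ᵥ Y = flat (q s * sharp Y * star (q s)) := by
    rw [hΛ, inv_eq_star_of_norm_eq_one (hunit s)]
  set p := star (q t) * q' t
  have hp : star p = -p := star_star_mul_eq_neg_of_hasDerivAt hu (hq t)
  have hq' : q' t = q t * p := by
    rw [← mul_assoc, mul_star_self_of_norm_eq_one (hunit t), one_mul]
  have hcomm Y : p * sharp Y - sharp Y * p = sharp (Ω t ⨯₃ Y) := by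
    have h := sharp_mulVec_eq_of_hasDerivAt hΛconj (hq t) (hΛderiv t) Y
    rw [hkin, ← mulVec_mulVec, hΛconj, sharp_flat_of_re_eq_zero (re_mul_sharp_mul_star _ _),
      hat_mulVec, hq', star_mul, hp] at h
    have hq0 : q t ≠ 0 := norm_ne_zero_iff.1 (by simp [hunit])
    apply mul_left_cancel₀ hq0
    apply mul_right_cancel₀ (star_ne_zero.2 hq0)
    rw [h]
    noncomm_ring
  rw [hq', eq_half_smul_sharp_of_forall_commutator (star_eq_neg.1 hp) hcomm, mul_smul_comm]
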